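/- Let R(x,z) = z^r + Σ_{k=1}^r c_k(x) z^{r-k} with c_k real analytic on an open set Ω ⊂ ℝ^m, and suppose that for some x₀ ∈ Ω we have R(x₀,z) = P₀(z) Q₀(z) where P₀, Q₀ are monic of degrees p, q = r - p and have no common complex root. Then there exist a neighbourhood U of x₀ and real analytic functions a_i : U → ℝ (i ≤ p), b_j : U → ℝ (j ≤ q) such that R(x,z) = (z^p + Σ a_i(x) z^{p-i})(z^q + Σ b_j(x) z^{q-j}) for all x ∈ U, with the factors specializing to P₀ and Q₀ at x₀. -/

import Mathlib

/-!
The map sending the coefficient vectors `(a, b)` of two monic polynomials of degrees `p` and `q`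
to the coefficient vector of their product is a polynomial, hence analytic, map
`ℝ^p × ℝ^q → ℝ^(p+q)`. Its differential at the coefficients of `(P₀, Q₀)` is the Sylvester map
`(A, B) ↦ A Q₀ + P₀ B` on polynomials of degrees `< p` and `< q`, which is injective because `P₀`
and `Q₀` are coprime, hence bijective by counting dimensions. The analytic inverse function theorem
gives an analytic local inverse, and composing it with the analytic coefficient map
`x ↦ (c_k(x))_k` yields the factors.
-/

open Polynomial

/-- The monic polynomial `z^n + a_1 z^{n-1} + ... + a_n` associated to a coefficient
vector `a ∈ ℝ^n`. -/
noncomputable def monicOfCoeffs (n : ℕ) (a : Fin n → ℝ) : Polynomial ℝ :=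
  Polynomial.X ^ n + ∑ i : Fin n, Polynomial.C (a i) * Polynomial.X ^ (n - 1 - (i : ℕ))

section Quadratic

variable {𝕜 E F G : Type*} [NontriviallyNormedField 𝕜] [NormedAddCommGroup E] [NormedSpace 𝕜 E]
  [NormedAddCommGroup F] [NormedSpace 𝕜 F] [NormedAddCommGroup G] [NormedSpace 𝕜 G]

theorem analyticAt_const_add_linear_add_bilinear (c : G) (L : E × F →L[𝕜] G)
    (B : E →L[𝕜] F →L[𝕜] G) (x : E × F) :
    AnalyticAt 𝕜 (fun y => c + L (y - x) + B (y - x).1 (y - x).2) x := by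
  have hsub : AnalyticAt 𝕜 (fun y => y - x) x := analyticAt_id.sub analyticAt_const
  exact (analyticAt_const.add ((L.analyticAt _).comp hsub)).add
    ((B.analyticAt_bilinear _).comp hsub)

theorem hasFDerivAt_const_add_linear_add_bilinear (c : G) (L : E × F →L[𝕜] G)
    (B : E →L[𝕜] F →L[𝕜] G) (x : E × F) :
    HasFDerivAt (fun y => c + L (y - x) + B (y - x).1 (y - x).2) L x := by
  have hsub : HasFDerivAt (fun y => y - x) (ContinuousLinearMap.id 𝕜 (E × F)) x :=
    (hasFDerivAt_id x).sub_const x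
  refine (((L.hasFDerivAt.comp x hsub).const_add c).add
    (B.hasFDerivAt_of_bilinear hsub.fst hsub.snd)).congr_fderiv ?_
  ext <;> simp

end Quadratic

theorem AnalyticAt.exists_analyticOnNhd_rightInverse {𝕜 E F : Type*} [NontriviallyNormedField 𝕜]
    [NormedAddCommGroup E] [NormedSpace 𝕜 E] [CompleteSpace E]
    [NormedAddCommGroup F] [NormedSpace 𝕜 F] [CompleteSpace F]
    {f : E → F} {e : E ≃L[𝕜] F} {a : E} (hf : AnalyticAt 𝕜 f a)
    (hf' : HasFDerivAt f (e : E →L[𝕜] F) a) :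
    ∃ g : F → E, ∃ V : Set F, IsOpen V ∧ f a ∈ V ∧ AnalyticOnNhd 𝕜 g V ∧
      (∀ y ∈ V, f (g y) = y) ∧ g (f a) = a := by
  have hstrict : HasStrictFDerivAt f (e : E →L[𝕜] F) a := hf'.fderiv ▸ hf.hasStrictFDerivAt
  have hg : AnalyticAt 𝕜 (hstrict.localInverse f e a) (f a) :=
    (hstrict.toOpenPartialHomeomorph f).analyticAt_symm'
      hstrict.mem_toOpenPartialHomeomorph_source hf hf'.fderiv
  obtain ⟨V, hVsub, hVopen, hV⟩ :=
    mem_nhds_iff.1 (hstrict.eventually_right_inverse.and hg.eventually_analyticAt)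
  exact ⟨_, V, hVopen, hV, fun y hy => (hVsub hy).2, fun y hy => (hVsub hy).1,
    hstrict.localInverse_apply_image⟩

section RevCoeffs

variable (R : Type*) [CommRing R] (n : ℕ)

noncomputable def ofRevCoeffs : (Fin n → R) →ₗ[R] R[X] :=
  Fintype.linearCombination R fun i : Fin n => (X : R[X]) ^ (n - 1 - (i : ℕ))

noncomputable def revCoeffs : R[X] →ₗ[R] (Fin n → R) :=
  LinearMap.pi fun i : Fin n => lcoeff R (n - 1 - (i : ℕ))

variable {R n}

theorem ofRevCoeffs_apply (v : Fin n → R) :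
    ofRevCoeffs R n v = ∑ i, C (v i) * X ^ (n - 1 - (i : ℕ)) := by
  simp [ofRevCoeffs, Fintype.linearCombination_apply, smul_eq_C_mul]

theorem revCoeffs_apply (P : R[X]) (i : Fin n) : revCoeffs R n P i = P.coeff (n - 1 - i) := rfl

theorem degree_ofRevCoeffs_lt (v : Fin n → R) : (ofRevCoeffs R n v).degree < n := by
  rw [ofRevCoeffs_apply]
  refine (degree_sum_le _ _).trans_lt ((Finset.sup_lt_iff (WithBot.bot_lt_coe n)).2 fun i _ => ?_)
  exact (degree_C_mul_X_pow_le _ _).trans_lt (Nat.cast_lt.2 (by omega))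

theorem revCoeffs_ofRevCoeffs (v : Fin n → R) : revCoeffs R n (ofRevCoeffs R n v) = v := by
  funext i
  simp only [revCoeffs_apply, ofRevCoeffs_apply, finsetSum_coeff, coeff_C_mul_X_pow]
  rw [Finset.sum_eq_single i (fun j _ hji => if_neg (by omega)) (by simp), if_pos rfl]

theorem ofRevCoeffs_injective : Function.Injective (ofRevCoeffs R n) :=
  Function.LeftInverse.injective revCoeffs_ofRevCoeffs

theorem eq_zero_of_revCoeffs_eq_zero {P : R[X]} (hP : P.degree < n) (h : revCoeffs R n P = 0) :
    P = 0 := by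
  ext j
  rcases lt_or_ge j n with hj | hj
  · simpa [revCoeffs_apply, show n - 1 - (n - 1 - j) = j by omega] using
      congrFun h ⟨n - 1 - j, by omega⟩
  · exact coeff_eq_zero_of_degree_lt (hP.trans_le (Nat.cast_le.2 hj))

end RevCoeffs

section MonicOfCoeffs

theorem monicOfCoeffs_eq_X_pow_add (n : ℕ) (a : Fin n → ℝ) :
    monicOfCoeffs n a = X ^ n + ofRevCoeffs ℝ n a := by
  rw [monicOfCoeffs, ofRevCoeffs_apply]

theorem monicOfCoeffs_add (n : ℕ) (a b : Fin n → ℝ) :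
    monicOfCoeffs n (a + b) = monicOfCoeffs n a + ofRevCoeffs ℝ n b := by
  rw [monicOfCoeffs_eq_X_pow_add, monicOfCoeffs_eq_X_pow_add, map_add, add_assoc]

theorem monic_monicOfCoeffs (n : ℕ) (a : Fin n → ℝ) : (monicOfCoeffs n a).Monic := by
  rw [monicOfCoeffs_eq_X_pow_add]
  exact monic_X_pow_add (degree_ofRevCoeffs_lt a)

theorem degree_monicOfCoeffs (n : ℕ) (a : Fin n → ℝ) : (monicOfCoeffs n a).degree = n := by
  rw [monicOfCoeffs_eq_X_pow_add, degree_add_eq_left_of_degree_lt, degree_X_pow]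
  exact (degree_X_pow (R := ℝ) n).symm ▸ degree_ofRevCoeffs_lt a

theorem revCoeffs_monicOfCoeffs (n : ℕ) (a : Fin n → ℝ) :
    revCoeffs ℝ n (monicOfCoeffs n a) = a := by
  funext i
  rw [monicOfCoeffs_eq_X_pow_add, map_add, Pi.add_apply, revCoeffs_ofRevCoeffs, revCoeffs_apply,
    coeff_X_pow, if_neg (by omega), zero_add]

theorem monicOfCoeffs_revCoeffs {n : ℕ} {P : ℝ[X]} (hP : P.Monic) (hPn : P.degree = n) :
    monicOfCoeffs n (revCoeffs ℝ n P) = P := by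
  set M := monicOfCoeffs n (revCoeffs ℝ n P)
  have hlt : (M - P).degree < n :=
    degree_monicOfCoeffs n _ ▸ degree_sub_lt_left (by rw [degree_monicOfCoeffs, hPn])
      (monic_monicOfCoeffs n _).ne_zero
      ((monic_monicOfCoeffs n _).leadingCoeff.trans hP.leadingCoeff.symm)
  rw [← sub_eq_zero]
  exact eq_zero_of_revCoeffs_eq_zero hlt (by rw [map_sub, revCoeffs_monicOfCoeffs, sub_self])

end MonicOfCoeffs

section Sylvester

variable {R : Type*} [CommRing R]

theorem IsCoprime.eq_zero_of_mul_add_mul_eq_zero [IsDomain R] {P Q A B : R[X]}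
    (hPQ : IsCoprime P Q) (hA : A.degree < P.degree) (h : A * Q + P * B = 0) : A = 0 ∧ B = 0 := by
  have hA0 : A = 0 :=
    eq_zero_of_dvd_of_degree_lt (hPQ.dvd_of_dvd_mul_right ⟨-B, by linear_combination h⟩) hA
  have hP0 : P ≠ 0 := by
    rintro rfl
    exact not_lt_bot (degree_zero (R := R) ▸ hA)
  simpa [hA0, hP0] using h

variable (R) in
noncomputable def mulRevCoeffs (p q : ℕ) :
    (Fin p → R) →ₗ[R] (Fin q → R) →ₗ[R] (Fin (p + q) → R) :=
  ((LinearMap.mul R R[X]).compl₁₂ (ofRevCoeffs R p) (ofRevCoeffs R q)).compr₂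
    (revCoeffs R (p + q))

noncomputable def sylvesterRevCoeffs (P Q : R[X]) (p q : ℕ) :
    (Fin p → R) × (Fin q → R) →ₗ[R] (Fin (p + q) → R) :=
  revCoeffs R (p + q) ∘ₗ
    ((LinearMap.mulRight R Q ∘ₗ ofRevCoeffs R p).coprod
      (LinearMap.mulLeft R P ∘ₗ ofRevCoeffs R q))

theorem mulRevCoeffs_apply {p q : ℕ} (A : Fin p → R) (B : Fin q → R) :
    mulRevCoeffs R p q A B = revCoeffs R (p + q) (ofRevCoeffs R p A * ofRevCoeffs R q B) := rfl

theorem sylvesterRevCoeffs_apply (P Q : R[X]) {p q : ℕ} (x : (Fin p → R) × (Fin q → R)) :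
    sylvesterRevCoeffs P Q p q x =
      revCoeffs R (p + q) (ofRevCoeffs R p x.1 * Q + P * ofRevCoeffs R q x.2) := rfl

theorem degree_mul_lt_of_degree_lt {P Q : R[X]} {p q : ℕ} (hP : P.degree < p)
    (hQ : Q.degree = q) : (P * Q).degree < (p + q : ℕ) := by
  rw [Nat.cast_add, ← hQ]
  exact (degree_mul_le P Q).trans_lt (WithBot.add_lt_add_right (hQ ▸ WithBot.coe_ne_bot) hP)

theorem sylvesterRevCoeffs_injective [IsDomain R] {P Q : R[X]} {p q : ℕ} (hPQ : IsCoprime P Q)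
    (hP : P.degree = p) (hQ : Q.degree = q) : Function.Injective (sylvesterRevCoeffs P Q p q) := by
  rw [injective_iff_map_eq_zero]
  rintro ⟨A, B⟩ h
  have hdeg : (ofRevCoeffs R p A * Q + P * ofRevCoeffs R q B).degree < (p + q : ℕ) :=
    (degree_add_le _ _).trans_lt <|
      max_lt (degree_mul_lt_of_degree_lt (degree_ofRevCoeffs_lt A) hQ)
        (add_comm p q ▸ mul_comm P _ ▸ degree_mul_lt_of_degree_lt (degree_ofRevCoeffs_lt B) hP)
  obtain ⟨hA, hB⟩ := hPQ.eq_zero_of_mul_add_mul_eq_zero (hP ▸ degree_ofRevCoeffs_lt A)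
    (eq_zero_of_revCoeffs_eq_zero hdeg h)
  rw [← map_zero (ofRevCoeffs R p), ofRevCoeffs_injective.eq_iff] at hA
  rw [← map_zero (ofRevCoeffs R q), ofRevCoeffs_injective.eq_iff] at hB
  simp [hA, hB]

end Sylvester

section MulCoeffs

variable {p q : ℕ}

noncomputable def mulCoeffs (p q : ℕ) (x : (Fin p → ℝ) × (Fin q → ℝ)) : Fin (p + q) → ℝ :=
  revCoeffs ℝ (p + q) (monicOfCoeffs p x.1 * monicOfCoeffs q x.2)

theorem monicOfCoeffs_mulCoeffs (x : (Fin p → ℝ) × (Fin q → ℝ)) :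
    monicOfCoeffs (p + q) (mulCoeffs p q x) = monicOfCoeffs p x.1 * monicOfCoeffs q x.2 := by
  refine monicOfCoeffs_revCoeffs ((monic_monicOfCoeffs p _).mul (monic_monicOfCoeffs q _)) ?_
  rw [degree_mul, degree_monicOfCoeffs, degree_monicOfCoeffs, Nat.cast_add]

theorem mulCoeffs_add (x h : (Fin p → ℝ) × (Fin q → ℝ)) :
    mulCoeffs p q (x + h) = mulCoeffs p q x +
      sylvesterRevCoeffs (monicOfCoeffs p x.1) (monicOfCoeffs q x.2) p q h +
      mulRevCoeffs ℝ p q h.1 h.2 := by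
  simp only [mulCoeffs, Prod.fst_add, Prod.snd_add, monicOfCoeffs_add, sylvesterRevCoeffs_apply,
    mulRevCoeffs_apply, ← map_add]
  congr 1
  ring

theorem exists_analyticOnNhd_factorization {a₀ : Fin p → ℝ} {b₀ : Fin q → ℝ}
    (hcop : IsCoprime (monicOfCoeffs p a₀) (monicOfCoeffs q b₀)) :
    ∃ ψ : (Fin (p + q) → ℝ) → (Fin p → ℝ) × (Fin q → ℝ), ∃ V : Set (Fin (p + q) → ℝ),
      IsOpen V ∧ mulCoeffs p q (a₀, b₀) ∈ V ∧ AnalyticOnNhd ℝ ψ V ∧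
      (∀ y ∈ V, monicOfCoeffs (p + q) y = monicOfCoeffs p (ψ y).1 * monicOfCoeffs q (ψ y).2) ∧
      ψ (mulCoeffs p q (a₀, b₀)) = (a₀, b₀) := by
  set x₀ : (Fin p → ℝ) × (Fin q → ℝ) := (a₀, b₀)
  have hinj :=
    sylvesterRevCoeffs_injective hcop (degree_monicOfCoeffs p a₀) (degree_monicOfCoeffs q b₀)
  have hdim :
      Module.finrank ℝ ((Fin p → ℝ) × (Fin q → ℝ)) = Module.finrank ℝ (Fin (p + q) → ℝ) := by
    simp
  set e := (LinearMap.linearEquivOfInjective _ hinj hdim).toContinuousLinearEquiv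
  set B := (mulRevCoeffs ℝ p q).toContinuousBilinearMap
  have hquad : mulCoeffs p q = fun y =>
      mulCoeffs p q x₀ + (e : _ →L[ℝ] _) (y - x₀) + B (y - x₀).1 (y - x₀).2 := by
    funext y
    simpa [e, B] using mulCoeffs_add x₀ (y - x₀)
  have hana := analyticAt_const_add_linear_add_bilinear (mulCoeffs p q x₀) (e : _ →L[ℝ] _) B x₀
  have hderiv :=
    hasFDerivAt_const_add_linear_add_bilinear (mulCoeffs p q x₀) (e : _ →L[ℝ] _) B x₀
  rw [← hquad] at hana hderiv
  obtain ⟨ψ, V, hV, hx₀V, hψ, hright, hψx₀⟩ := hana.exists_analyticOnNhd_rightInverse hderiv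
  refine ⟨ψ, V, hV, hx₀V, hψ, fun y hy => ?_, hψx₀⟩
  rw [← monicOfCoeffs_mulCoeffs, hright y hy]

end MulCoeffs

/-- If `R(x,z) = z^r + ∑ c_k(x) z^{r-k}` has real analytic coefficients on an open
`Ω ⊂ ℝ^m` and `R(x₀, ·) = P₀ · Q₀` with `P₀, Q₀` monic of degrees `p`, `q = r - p`
without common complex roots, then on a neighbourhood `U` of `x₀` the family splits
analytically as a product of monic families of degrees `p` and `q`, specializing to
`P₀` and `Q₀` at `x₀`. -/
theorem analytic_splitting (m r p q : ℕ) (hpq : p + q = r)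
    (Ω : Set (Fin m → ℝ)) (hΩ : IsOpen Ω)
    (c : Fin r → (Fin m → ℝ) → ℝ) (hc : ∀ k, AnalyticOnNhd ℝ (c k) Ω)
    (x₀ : Fin m → ℝ) (hx₀ : x₀ ∈ Ω)
    (P₀ Q₀ : Polynomial ℝ) (hP₀ : P₀.Monic) (hP₀d : P₀.natDegree = p)
    (hQ₀ : Q₀.Monic) (hQ₀d : Q₀.natDegree = q)
    (hnc : ∀ z : ℂ, ¬(Polynomial.aeval z P₀ = 0 ∧ Polynomial.aeval z Q₀ = 0))
    (hsplit : monicOfCoeffs r (fun k => c k x₀) = P₀ * Q₀) :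
    ∃ (U : Set (Fin m → ℝ)) (a : (Fin m → ℝ) → (Fin p → ℝ))
      (b : (Fin m → ℝ) → (Fin q → ℝ)),
      IsOpen U ∧ x₀ ∈ U ∧ U ⊆ Ω ∧
      AnalyticOnNhd ℝ a U ∧ AnalyticOnNhd ℝ b U ∧
      (∀ x ∈ U, monicOfCoeffs r (fun k => c k x) =
        monicOfCoeffs p (a x) * monicOfCoeffs q (b x)) ∧
      monicOfCoeffs p (a x₀) = P₀ ∧ monicOfCoeffs q (b x₀) = Q₀ := by
  subst hpq
  have hP₀' : monicOfCoeffs p (revCoeffs ℝ p P₀) = P₀ :=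
    monicOfCoeffs_revCoeffs hP₀ (hP₀d ▸ degree_eq_natDegree hP₀.ne_zero)
  have hQ₀' : monicOfCoeffs q (revCoeffs ℝ q Q₀) = Q₀ :=
    monicOfCoeffs_revCoeffs hQ₀ (hQ₀d ▸ degree_eq_natDegree hQ₀.ne_zero)
  have hcop : IsCoprime P₀ Q₀ := by
    rw [isCoprime_iff_aeval_ne_zero_of_isAlgClosed ℝ ℂ]
    exact fun z => not_and_or.1 (hnc z)
  obtain ⟨ψ, V, hV, hy₀V, hψ, hfact, hψy₀⟩ :=
    exists_analyticOnNhd_factorization (hP₀'.symm ▸ hQ₀'.symm ▸ hcop)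
  set C : (Fin m → ℝ) → Fin (p + q) → ℝ := fun x k => c k x
  have hC : AnalyticOnNhd ℝ C Ω := fun x hx => AnalyticAt.pi fun k => hc k x hx
  have hCx₀ : C x₀ = mulCoeffs p q (revCoeffs ℝ p P₀, revCoeffs ℝ q Q₀) := by
    rw [mulCoeffs, hP₀', hQ₀', ← hsplit, revCoeffs_monicOfCoeffs]
  have hψC : AnalyticOnNhd ℝ (ψ ∘ C) (Ω ∩ C ⁻¹' V) := fun x hx => (hψ _ hx.2).comp (hC x hx.1)
  refine ⟨Ω ∩ C ⁻¹' V, fun x => (ψ (C x)).1, fun x => (ψ (C x)).2,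
    hC.continuousOn.isOpen_inter_preimage hΩ hV, ⟨hx₀, show C x₀ ∈ V from hCx₀ ▸ hy₀V⟩,
    Set.inter_subset_left, fun x hx => analyticAt_fst.comp (hψC x hx),
    fun x hx => analyticAt_snd.comp (hψC x hx), fun x hx => hfact _ hx.2, ?_, ?_⟩
  · simp only [hCx₀, hψy₀, hP₀']
  · simp only [hCx₀, hψy₀, hQ₀']
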